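/- For 0 < q < 1, writing d(n) = [n+1]_q, the function M ↦ d(M+1)² / (∑_{m=1}^{M} d(m)²) is strictly decreasing on the positive integers. -/
import Mathlib


noncomputable def qnum (q : ℝ) (n : ℕ) : ℝ := (q⁻¹ ^ n - q ^ n) / (q⁻¹ - q)

noncomputable def d (q : ℝ) (n : ℕ) : ℝ := qnum q (n + 1)

section aux

variable {q : ℝ}

lemma q_lt_inv (hq : 0 < q) (hq1 : q < 1) : q < q⁻¹ := by
  have h1 : (1:ℝ) < q⁻¹ := (one_lt_inv₀ hq).mpr hq1
  linarith

lemma denom_pos (hq : 0 < q) (hq1 : q < 1) : (0:ℝ) < q⁻¹ - q := by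
  have := q_lt_inv hq hq1
  linarith

lemma d_pos (hq : 0 < q) (hq1 : q < 1) (n : ℕ) : 0 < d q n := by
  unfold d qnum
  apply div_pos _ (denom_pos hq hq1)
  have h := pow_lt_pow_left₀ (q_lt_inv hq hq1) hq.le (Nat.succ_ne_zero n)
  simp only [Nat.succ_eq_add_one] at h
  linarith

lemma d_mono (hq : 0 < q) (hq1 : q < 1) (n : ℕ) : d q n < d q (n + 1) := by
  unfold d qnum
  apply div_lt_div_of_pos_right _ (denom_pos hq hq1)
  have h1 : q⁻¹ ^ (n + 1) ≤ q⁻¹ ^ (n + 1 + 1) := by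
    apply pow_le_pow_right₀ ((one_le_inv₀ hq).mpr hq1.le)
    omega
  have h2 : q ^ (n + 1 + 1) < q ^ (n + 1) := by
    apply pow_lt_pow_right_of_lt_one₀ hq hq1
    omega
  linarith

lemma d_logconc (hq : 0 < q) (hq1 : q < 1) (n : ℕ) :
    d q n * d q (n + 2) ≤ d q (n + 1) ^ 2 := by
  unfold d qnum
  rw [div_mul_div_comm, div_pow, ← pow_two (q⁻¹ - q)]
  gcongr
  · set u : ℝ := q ^ (n + 1) with hu
    set v : ℝ := q⁻¹ ^ (n + 1) with hv
    have huv : u * v = 1 := by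
      rw [hu, hv, ← mul_pow, mul_inv_cancel₀ hq.ne', one_pow]
    have e1 : q ^ (n + 1 + 1) = u * q := by rw [hu, pow_succ]
    have e2 : q ^ (n + 2 + 1) = u * q ^ 2 := by rw [hu]; ring
    have e3 : q⁻¹ ^ (n + 1 + 1) = v * q⁻¹ := by rw [hv, pow_succ]
    have e4 : q⁻¹ ^ (n + 2 + 1) = v * q⁻¹ ^ 2 := by rw [hv]; ring
    rw [e1, e2, e3, e4]
    have hupos : (0:ℝ) < u := pow_pos hq _
    have hvpos : (0:ℝ) < v := pow_pos (inv_pos.mpr hq) _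
    nlinarith [mul_nonneg (mul_nonneg hupos.le hvpos.le) (sq_nonneg (q⁻¹ - q)), sq_nonneg (q⁻¹ - q)]

/-- The partial sums. -/
noncomputable def S (q : ℝ) (M : ℕ) : ℝ := ∑ m ∈ Finset.Icc 1 M, d q m ^ 2

lemma S_succ (M : ℕ) : S q (M + 1) = S q M + d q (M + 1) ^ 2 := by
  unfold S
  rw [Finset.sum_Icc_succ_top (by omega)]

lemma S_pos (hq : 0 < q) (hq1 : q < 1) {M : ℕ} (hM : 1 ≤ M) : 0 < S q M := by
  unfold S
  apply Finset.sum_pos (fun i _ => pow_pos (d_pos hq hq1 i) 2)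
  exact ⟨1, Finset.mem_Icc.mpr ⟨le_refl 1, hM⟩⟩

lemma key (hq : 0 < q) (hq1 : q < 1) (M : ℕ) :
    S q M * d q (M + 2) ^ 2 < d q (M + 1) ^ 2 * S q (M + 1) := by
  induction M with
  | zero =>
    have h0 : S q 0 = 0 := by unfold S; simp
    have h1 : S q 1 = d q 1 ^ 2 := by unfold S; simp
    rw [h0, h1, zero_mul]
    exact mul_pos (pow_pos (d_pos hq hq1 _) 2) (pow_pos (d_pos hq hq1 _) 2)
  | succ M ih =>
    have hA : S q (M + 1) * d q (M + 2) ^ 2 < d q (M + 1) ^ 2 * S q (M + 2) := by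
      rw [S_succ M, S_succ (M + 1)]
      nlinarith [ih]
    have hB : d q (M + 1) ^ 2 * d q (M + 3) ^ 2 ≤ d q (M + 2) ^ 2 * d q (M + 2) ^ 2 := by
      have hl := d_logconc hq hq1 (M + 1)
      have h1 := d_pos hq hq1 (M + 1)
      have h3 := d_pos hq hq1 (M + 3)
      have h2 := d_pos hq hq1 (M + 2)
      have hn : M + 1 + 2 = M + 3 := rfl
      have hn' : M + 1 + 1 = M + 2 := rfl
      rw [hn, hn'] at hl
      have hsq := mul_le_mul hl hl (mul_nonneg h1.le h3.le) (sq_nonneg _)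
      nlinarith [hsq]
    have hd1 : (0:ℝ) < d q (M + 1) ^ 2 := pow_pos (d_pos hq hq1 _) 2
    have hS1 : (0:ℝ) < S q (M + 1) := S_pos hq hq1 (by omega)
    have hS2 : (0:ℝ) < S q (M + 2) := S_pos hq hq1 (by omega)
    have hn1 : M + 1 + 1 = M + 2 := rfl
    have hn2 : M + 1 + 2 = M + 3 := rfl
    rw [hn1, hn2]
    have step : d q (M + 1) ^ 2 * (S q (M + 1) * d q (M + 3) ^ 2) <
        d q (M + 1) ^ 2 * (d q (M + 2) ^ 2 * S q (M + 2)) := by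
      nlinarith [mul_le_mul_of_nonneg_left hB hS1.le,
        mul_lt_mul_of_pos_right hA (pow_pos (d_pos hq hq1 (M + 2)) 2)]
    exact lt_of_mul_lt_mul_left step hd1.le

lemma step_lemma (hq : 0 < q) (hq1 : q < 1) {M : ℕ} (hM : 1 ≤ M) :
    d q (M + 1 + 1) ^ 2 / S q (M + 1) < d q (M + 1) ^ 2 / S q M := by
  rw [div_lt_div_iff₀ (S_pos hq hq1 (by omega)) (S_pos hq hq1 hM)]
  have := key hq hq1 M
  nlinarith [this]

end aux

theorem stmt_4 (q : ℝ) (hq : 0 < q) (hq1 : q < 1) :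
    ∀ M N : ℕ, 1 ≤ M → M < N →
      d q (N + 1) ^ 2 / (∑ m ∈ Finset.Icc 1 N, d q m ^ 2) <
        d q (M + 1) ^ 2 / (∑ m ∈ Finset.Icc 1 M, d q m ^ 2) := by
  intro M N hM hMN
  have hS : ∀ K : ℕ, (∑ m ∈ Finset.Icc 1 K, d q m ^ 2) = S q K := fun K => rfl
  rw [hS, hS]
  induction N, hMN using Nat.le_induction with
  | base => exact step_lemma hq hq1 hM
  | succ N hN ih =>
    exact lt_trans (step_lemma hq hq1 (by omega)) ih
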